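/- arXiv:2203.06594 — 4 statements merged into one kernel-verified Lean document; each statement's English description precedes it below -/
import Mathlib

section
/- The local antimagic chromatic number of the triangular prism C₃ × P₂ equals 3. -/
open Finset

variable {V : Type*} [Fintype V] [DecidableEq V]

/-- The induced vertex sum `f⁺(v)`: sum of labels of edges incident to `v`. -/
def fplus (G : SimpleGraph V) [DecidableRel G.Adj] (f : Sym2 V → ℕ) (v : V) : ℕ :=
  ∑ e ∈ G.edgeFinset.filter (fun e => v ∈ e), f e

/-- `f` is a local antimagic labeling of `G`: it is a bijection from the edges of `G`
onto `{1, …, q}` and adjacent vertices get distinct induced sums. -/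
def IsLocalAntimagic (G : SimpleGraph V) [DecidableRel G.Adj] (f : Sym2 V → ℕ) : Prop :=
  Set.BijOn f ↑G.edgeFinset ↑(Finset.Icc 1 G.edgeFinset.card) ∧
  ∀ ⦃u v : V⦄, G.Adj u v → fplus G f u ≠ fplus G f v

/-- The number of distinct induced vertex colors of the labeling `f`. -/
def colorCount (G : SimpleGraph V) [DecidableRel G.Adj] (f : Sym2 V → ℕ) : ℕ :=
  (Finset.univ.image (fplus G f)).card

/-- The local antimagic chromatic number `χ_la(G)`. -/
noncomputable def chiLA (G : SimpleGraph V) [DecidableRel G.Adj] : ℕ :=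
  sInf {t | ∃ f : Sym2 V → ℕ, IsLocalAntimagic G f ∧ colorCount G f = t}

/-- Decidability of adjacency for graphs built with `SimpleGraph.fromRel`. -/
instance fromRelDecidable {α : Type*} [DecidableEq α] (r : α → α → Prop) [DecidableRel r] :
    DecidableRel (SimpleGraph.fromRel r).Adj := fun a b =>
  decidable_of_iff _ (SimpleGraph.fromRel_adj r a b).symm

/-- The triangular prism `C₃ × P₂`, as a graph on `Fin 3 × Fin 2`. -/
def prismGraph : SimpleGraph (Fin 3 × Fin 2) :=
  SimpleGraph.fromRel (fun a b => (a.1 = b.1 ∧ a.2 ≠ b.2) ∨ (a.2 = b.2 ∧ a.1 ≠ b.1))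

instance : DecidableRel prismGraph.Adj := fun a b => by
  unfold prismGraph; rw [SimpleGraph.fromRel_adj]; infer_instance

/-- Edge-label table, indexed by `2*i + j` for a vertex `(i, j)`. -/
def labTable : ℕ → ℕ → ℕ
  | 0, 2 => 1 | 2, 0 => 1
  | 2, 4 => 3 | 4, 2 => 3
  | 4, 0 => 7 | 0, 4 => 7
  | 1, 3 => 5 | 3, 1 => 5
  | 3, 5 => 4 | 5, 3 => 4
  | 5, 1 => 2 | 1, 5 => 2
  | 0, 1 => 6 | 1, 0 => 6
  | 2, 3 => 9 | 3, 2 => 9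
  | 4, 5 => 8 | 5, 4 => 8
  | _, _ => 0

def labFun : Sym2 (Fin 3 × Fin 2) → ℕ :=
  Sym2.lift ⟨fun a b => labTable (2 * a.1.val + a.2.val) (2 * b.1.val + b.2.val),
    by decide⟩

theorem chiLA_prism : chiLA prismGraph = 3 := by
  have h3 : 3 ∈ {t | ∃ f : Sym2 (Fin 3 × Fin 2) → ℕ,
      IsLocalAntimagic prismGraph f ∧ colorCount prismGraph f = t} := by
    refine ⟨labFun, ⟨⟨?_, ?_, ?_⟩, ?_⟩, ?_⟩
    · intro e he
      rw [Finset.mem_coe] at he ⊢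
      revert e he; decide
    · intro a ha b hb hab
      rw [Finset.mem_coe] at ha hb
      revert a b; decide
    · rw [Set.SurjOn, ← Finset.coe_image]
      exact Finset.coe_subset.mpr (by decide)
    · decide
    · decide
  refine le_antisymm (Nat.sInf_le h3) (le_csInf ⟨3, h3⟩ ?_)
  rintro t ⟨f, ⟨-, hadj⟩, rfl⟩
  have hab : fplus prismGraph f (0, 0) ≠ fplus prismGraph f (1, 0) :=
    hadj (by decide)
  have hbc : fplus prismGraph f (1, 0) ≠ fplus prismGraph f (2, 0) :=
    hadj (by decide)
  have hac : fplus prismGraph f (0, 0) ≠ fplus prismGraph f (2, 0) :=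
    hadj (by decide)
  have hsub : ({fplus prismGraph f (0, 0), fplus prismGraph f (1, 0),
      fplus prismGraph f (2, 0)} : Finset ℕ) ⊆
      Finset.univ.image (fplus prismGraph f) := by
    intro x hx
    simp only [Finset.mem_insert, Finset.mem_singleton] at hx
    rcases hx with h | h | h <;> subst h <;>
      exact Finset.mem_image_of_mem _ (Finset.mem_univ _)
  have hcard : ({fplus prismGraph f (0, 0), fplus prismGraph f (1, 0),
      fplus prismGraph f (2, 0)} : Finset ℕ).card = 3 := by
    rw [Finset.card_insert_of_notMem (by simp only [Finset.mem_insert, Finset.mem_singleton]; push_neg; exact ⟨hab, hac⟩),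
      Finset.card_insert_of_notMem (by simpa using hbc), Finset.card_singleton]
  calc 3 = _ := hcard.symm
    _ ≤ _ := Finset.card_le_card hsub
end

section
/- The local antimagic chromatic number of the cube graph C₄ × P₂ equals 4. -/
open Finset

variable {V : Type*} [Fintype V] [DecidableEq V]

/-- The cube graph `C₄ × P₂` (the 3-dimensional hypercube `Q₃`), as a graph on
`Fin 4 × Fin 2`: a 4-cycle on each level, plus vertical edges. -/
def cubeGraph : SimpleGraph (Fin 4 × Fin 2) :=
  SimpleGraph.fromRel (fun a b =>
    (a.2 = b.2 ∧ (a.1 = b.1 + 1 ∨ b.1 = a.1 + 1)) ∨ (a.1 = b.1 ∧ a.2 ≠ b.2))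

instance : DecidableRel cubeGraph.Adj := fun a b => by
  unfold cubeGraph; rw [SimpleGraph.fromRel_adj]; infer_instance


section Aux

set_option maxHeartbeats 4000000 in
lemma key8 (c0 c1 c2 c3 c4 c5 c6 c7 x y z : ℕ)
    (h1 : c0 ≠ c1) (h2 : c1 ≠ c2) (h3 : c2 ≠ c3) (h4 : c3 ≠ c0)
    (h5 : c4 ≠ c5) (h6 : c5 ≠ c6) (h7 : c6 ≠ c7) (h8 : c7 ≠ c4)
    (h9 : c0 ≠ c4) (h10 : c1 ≠ c5) (h11 : c2 ≠ c6) (h12 : c3 ≠ c7)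
    (m0 : c0 = x ∨ c0 = y ∨ c0 = z) (m1 : c1 = x ∨ c1 = y ∨ c1 = z)
    (m2 : c2 = x ∨ c2 = y ∨ c2 = z) (m3 : c3 = x ∨ c3 = y ∨ c3 = z)
    (m4 : c4 = x ∨ c4 = y ∨ c4 = z) (m5 : c5 = x ∨ c5 = y ∨ c5 = z)
    (m6 : c6 = x ∨ c6 = y ∨ c6 = z) (m7 : c7 = x ∨ c7 = y ∨ c7 = z)
    (hA : c0 + (c2 + (c5 + c7)) = 78) (hB : c1 + (c3 + (c4 + c6)) = 78) : False := by
  rcases m0 with rfl|rfl|rfl <;> rcases m1 with rfl|rfl|rfl <;> (try contradiction) <;>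
  rcases m2 with rfl|rfl|rfl <;> (try contradiction) <;>
  rcases m3 with rfl|rfl|rfl <;> (try contradiction) <;>
  rcases m4 with rfl|rfl|rfl <;> (try contradiction) <;>
  rcases m5 with rfl|rfl|rfl <;> (try contradiction) <;>
  rcases m6 with rfl|rfl|rfl <;> (try contradiction) <;>
  rcases m7 with rfl|rfl|rfl <;> (try contradiction) <;>
  omega

lemma sum_fplus_eq (G : SimpleGraph V) [DecidableRel G.Adj] (f : Sym2 V → ℕ) (A : Finset V)
    (h : ∀ e ∈ G.edgeFinset, (A.filter (fun v => v ∈ e)).card = 1) :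
    ∑ v ∈ A, fplus G f v = ∑ e ∈ G.edgeFinset, f e := by
  unfold fplus
  calc ∑ v ∈ A, ∑ e ∈ G.edgeFinset.filter (fun e => v ∈ e), f e
      = ∑ v ∈ A, ∑ e ∈ G.edgeFinset, if v ∈ e then f e else 0 := by
        simp [Finset.sum_filter]
    _ = ∑ e ∈ G.edgeFinset, ∑ v ∈ A, if v ∈ e then f e else 0 := Finset.sum_comm
    _ = ∑ e ∈ G.edgeFinset, f e := by
        refine Finset.sum_congr rfl fun e he => ?_
        rw [← Finset.sum_filter, Finset.sum_const, h e he, one_smul]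

lemma sum_image_eq (G : SimpleGraph V) [DecidableRel G.Adj] (f : Sym2 V → ℕ)
    (hbij : Set.BijOn f ↑G.edgeFinset ↑(Finset.Icc 1 G.edgeFinset.card)) :
    ∑ e ∈ G.edgeFinset, f e = ∑ k ∈ Finset.Icc 1 G.edgeFinset.card, k := by
  have himg : G.edgeFinset.image f = Finset.Icc 1 G.edgeFinset.card := by
    apply Finset.coe_injective
    rw [Finset.coe_image]
    exact hbij.image_eq
  rw [← himg]
  rw [Finset.sum_image (fun a ha b hb hab => hbij.injOn ha hb hab)]

lemma card_le_three_exists (s : Finset ℕ) (h : s.card ≤ 3) :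
    ∃ x y z, ∀ a ∈ s, a = x ∨ a = y ∨ a = z := by
  classical
  induction s using Finset.induction with
  | empty => exact ⟨0, 0, 0, by simp⟩
  | @insert a s ha ih =>
    have hs : s.card ≤ 2 := by
      rw [Finset.card_insert_of_notMem ha] at h; omega
    have h2 : ∃ x y, ∀ b ∈ s, b = x ∨ b = y := by
      induction s using Finset.induction with
      | empty => exact ⟨0, 0, by simp⟩
      | @insert b t hb ih2 =>
        have ht : t.card ≤ 1 := by rw [Finset.card_insert_of_notMem hb] at hs; omega
        obtain ⟨c, hc⟩ := Finset.card_le_one_iff_subset_singleton.mp ht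
        refine ⟨b, c, fun d hd => ?_⟩
        rcases Finset.mem_insert.mp hd with rfl | hd
        · exact Or.inl rfl
        · exact Or.inr (Finset.mem_singleton.mp (hc hd))
    obtain ⟨x, y, hxy⟩ := h2
    refine ⟨a, x, y, fun b hb => ?_⟩
    rcases Finset.mem_insert.mp hb with rfl | hb
    · exact Or.inl rfl
    · rcases hxy b hb with h' | h' <;> simp [h']

/-- The even side of the bipartition of the cube graph. -/
def sideA : Finset (Fin 4 × Fin 2) :=
  Finset.univ.filter (fun v => (v.1.val + v.2.val) % 2 = 0)

/-- The odd side of the bipartition of the cube graph. -/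
def sideB : Finset (Fin 4 × Fin 2) :=
  Finset.univ.filter (fun v => (v.1.val + v.2.val) % 2 = 1)

/-- An explicit local antimagic labeling of the cube with 4 colors. -/
def cubeLabel : Sym2 (Fin 4 × Fin 2) → ℕ := fun e =>
  if e = s(((0:Fin 4),(0:Fin 2)),(1,0)) then 1
  else if e = s(((1:Fin 4),(0:Fin 2)),(2,0)) then 2
  else if e = s(((2:Fin 4),(0:Fin 2)),(3,0)) then 3
  else if e = s(((3:Fin 4),(0:Fin 2)),(0,0)) then 5
  else if e = s(((0:Fin 4),(1:Fin 2)),(1,1)) then 6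
  else if e = s(((1:Fin 4),(1:Fin 2)),(2,1)) then 7
  else if e = s(((2:Fin 4),(1:Fin 2)),(3,1)) then 8
  else if e = s(((3:Fin 4),(1:Fin 2)),(0,1)) then 10
  else if e = s(((0:Fin 4),(0:Fin 2)),(0,1)) then 11
  else if e = s(((1:Fin 4),(0:Fin 2)),(1,1)) then 9
  else if e = s(((2:Fin 4),(0:Fin 2)),(2,1)) then 12
  else if e = s(((3:Fin 4),(0:Fin 2)),(3,1)) then 4
  else 0

lemma cube_mem : (4 : ℕ) ∈ {t | ∃ f : Sym2 (Fin 4 × Fin 2) → ℕ,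
    IsLocalAntimagic cubeGraph f ∧ colorCount cubeGraph f = t} := by
  refine ⟨cubeLabel, ⟨?_, by decide⟩, by decide⟩
  have himg : cubeGraph.edgeFinset.image cubeLabel
      = Finset.Icc 1 cubeGraph.edgeFinset.card := by decide
  have hinj : Set.InjOn cubeLabel ↑cubeGraph.edgeFinset :=
    Finset.card_image_iff.mp (by decide)
  refine ⟨fun e he => ?_, hinj, fun a ha => ?_⟩
  · rw [← himg, Finset.coe_image]
    exact Set.mem_image_of_mem _ he
  · rw [← himg, Finset.coe_image] at ha
    exact ha

theorem chiLA_cube : chiLA cubeGraph = 4 := by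
  refine le_antisymm (Nat.sInf_le cube_mem) (le_csInf ⟨4, cube_mem⟩ ?_)
  rintro t ⟨f, ⟨hbij, hadj⟩, rfl⟩
  by_contra hlt
  push_neg at hlt
  have hle3 : (Finset.univ.image (fplus cubeGraph f)).card ≤ 3 := by
    have : colorCount cubeGraph f < 4 := hlt
    unfold colorCount at this
    omega
  obtain ⟨x, y, z, hxyz⟩ := card_le_three_exists _ hle3
  have hm : ∀ v, fplus cubeGraph f v = x ∨ fplus cubeGraph f v = y ∨ fplus cubeGraph f v = z :=
    fun v => hxyz _ (Finset.mem_image_of_mem _ (Finset.mem_univ v))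
  have hcard : cubeGraph.edgeFinset.card = 12 := by decide
  have htot : ∑ e ∈ cubeGraph.edgeFinset, f e = 78 := by
    rw [sum_image_eq cubeGraph f hbij, hcard]
    decide
  have hA : ∑ v ∈ sideA, fplus cubeGraph f v = 78 := by
    rw [sum_fplus_eq cubeGraph f sideA (by decide), htot]
  have hB : ∑ v ∈ sideB, fplus cubeGraph f v = 78 := by
    rw [sum_fplus_eq cubeGraph f sideB (by decide), htot]
  have eA : sideA = {((0:Fin 4),(0:Fin 2)), (2,0), (1,1), (3,1)} := by decide
  have eB : sideB = {((1:Fin 4),(0:Fin 2)), (3,0), (0,1), (2,1)} := by decide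
  rw [eA] at hA
  rw [eB] at hB
  rw [Finset.sum_insert (by decide), Finset.sum_insert (by decide),
      Finset.sum_insert (by decide), Finset.sum_singleton] at hA hB
  exact key8 (fplus cubeGraph f (0,0)) (fplus cubeGraph f (1,0)) (fplus cubeGraph f (2,0))
    (fplus cubeGraph f (3,0)) (fplus cubeGraph f (0,1)) (fplus cubeGraph f (1,1))
    (fplus cubeGraph f (2,1)) (fplus cubeGraph f (3,1)) x y z
    (hadj (by decide)) (hadj (by decide)) (hadj (by decide)) (hadj (by decide))
    (hadj (by decide)) (hadj (by decide)) (hadj (by decide)) (hadj (by decide))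
    (hadj (by decide)) (hadj (by decide)) (hadj (by decide)) (hadj (by decide))
    (hm _) (hm _) (hm _) (hm _) (hm _) (hm _) (hm _) (hm _) hA hB

end Aux
end

section
/- The octahedral graph K_{2,2,2} has local antimagic chromatic number equal to 3. -/
open Finset

variable {V : Type*} [Fintype V] [DecidableEq V]

/-- The octahedral graph `K_{2,2,2}`: vertices are pairs (part, index) and two vertices
are adjacent iff they lie in different parts. -/
def octahedronGraph : SimpleGraph (Fin 3 × Fin 2) :=
  SimpleGraph.fromRel (fun a b => a.1 ≠ b.1)

instance : DecidableRel octahedronGraph.Adj := fun a b => by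
  unfold octahedronGraph; rw [SimpleGraph.fromRel_adj]; infer_instance


def octArr : List ℕ :=
  [0, 0, 1, 2, 5, 12, 0, 0, 6, 3, 7, 4, 0, 0, 0, 0, 10, 8,
   0, 0, 0, 0, 11, 9, 0, 0, 0, 0, 0, 0, 0, 0, 0, 0, 0, 0]

def octEnc (v : Fin 3 × Fin 2) : ℕ := 2 * v.1.val + v.2.val

def octF : Sym2 (Fin 3 × Fin 2) → ℕ :=
  Sym2.lift ⟨fun a b => octArr.getD (6 * min (octEnc a) (octEnc b) + max (octEnc a) (octEnc b)) 0,
    by intro a b; dsimp only; rw [min_comm, max_comm]⟩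

lemma bijOn_of_image {α β : Type*} [DecidableEq β] (s : Finset α) (t : Finset β) (f : α → β)
    (h : s.image f = t) (hc : t.card = s.card) : Set.BijOn f ↑s ↑t := by
  refine ⟨fun x hx => ?_, ?_, ?_⟩
  · rw [← h]; exact_mod_cast Finset.mem_image_of_mem f hx
  · have : (s.image f).card = s.card := by rw [h, hc]
    exact Finset.injOn_of_card_image_eq this
  · rw [← h, Finset.coe_image]; exact Set.Subset.rfl

theorem chiLA_octahedron : chiLA octahedronGraph = 3 := by
  
  have h3 : 3 ∈ {t | ∃ f : Sym2 (Fin 3 × Fin 2) → ℕ,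
      IsLocalAntimagic octahedronGraph f ∧ colorCount octahedronGraph f = t} := by
    refine ⟨octF, ⟨?_, ?_⟩, ?_⟩
    · exact bijOn_of_image _ _ _ (by decide) (by decide)
    · decide
    · decide
  have hlb : ∀ t ∈ {t | ∃ f : Sym2 (Fin 3 × Fin 2) → ℕ,
      IsLocalAntimagic octahedronGraph f ∧ colorCount octahedronGraph f = t}, 3 ≤ t := by
    rintro t ⟨f, ⟨_, hadj⟩, rfl⟩
    have a01 : octahedronGraph.Adj (0, 0) (1, 0) := by decide
    have a02 : octahedronGraph.Adj (0, 0) (2, 0) := by decide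
    have a12 : octahedronGraph.Adj (1, 0) (2, 0) := by decide
    have hsub : ({fplus octahedronGraph f (0,0), fplus octahedronGraph f (1,0),
        fplus octahedronGraph f (2,0)} : Finset ℕ) ⊆ Finset.univ.image (fplus octahedronGraph f) := by
      intro x hx
      simp only [Finset.mem_insert, Finset.mem_singleton] at hx
      rcases hx with rfl | rfl | rfl <;> exact Finset.mem_image_of_mem _ (Finset.mem_univ _)
    have hcard : ({fplus octahedronGraph f (0,0), fplus octahedronGraph f (1,0),
        fplus octahedronGraph f (2,0)} : Finset ℕ).card = 3 := by
      rw [Finset.card_insert_of_notMem, Finset.card_insert_of_notMem, Finset.card_singleton]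
      · simp only [Finset.mem_singleton]
        exact hadj a12
      · simp only [Finset.mem_insert, Finset.mem_singleton, not_or]
        exact ⟨hadj a01, hadj a02⟩
    calc 3 = _ := hcard.symm
    _ ≤ _ := Finset.card_le_card hsub
  exact le_antisymm (Nat.sInf_le h3) (le_csInf ⟨3, h3⟩ hlb)
end

section
/- The circulant graph C₇(1,2) has local antimagic chromatic number 4, and the complement of the disjoint union C₃ + C₄ has local antimagic chromatic number 3. -/
open Finset

variable {V : Type*} [Fintype V] [DecidableEq V]

/-- The circulant graph `C₇(1,2)` on `ZMod 7`: `i ~ j` iff `i - j ≡ ±1, ±2 (mod 7)`. -/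
def circulant7_12 : SimpleGraph (ZMod 7) :=
  SimpleGraph.fromRel (fun a b => a - b = 1 ∨ a - b = 2)

instance : DecidableRel circulant7_12.Adj := fun a b => by
  unfold circulant7_12; rw [SimpleGraph.fromRel_adj]; infer_instance

/-- The disjoint union `C₃ + C₄` on 7 vertices: a triangle on `{0,1,2}` and a
4-cycle on `{3,4,5,6}`. -/
def c3PlusC4 : SimpleGraph (Fin 7) :=
  SimpleGraph.fromRel (fun a b =>
    (a, b) ∈ ([(0, 1), (1, 2), (2, 0), (3, 4), (4, 5), (5, 6), (6, 3)] : List (Fin 7 × Fin 7)))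

instance : DecidableRel c3PlusC4.Adj := fun a b => by
  unfold c3PlusC4; rw [SimpleGraph.fromRel_adj]; infer_instance

/-- Edge label table for `C₇(1,2)`. -/
def T1 : ℕ → ℕ → ℕ
  | 0, 1 => 8 | 0, 2 => 7 | 0, 5 => 9 | 0, 6 => 4 | 1, 2 => 10 | 1, 3 => 3 | 1, 6 => 13
  | 2, 3 => 12 | 2, 4 => 11 | 3, 4 => 2 | 3, 5 => 6 | 4, 5 => 14 | 4, 6 => 1 | 5, 6 => 5
  | _, _ => 0

def f1 : Sym2 (ZMod 7) → ℕ :=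
  Sym2.lift ⟨fun a b => T1 (min a.val b.val) (max a.val b.val),
    fun a b => by simp [min_comm, max_comm, inf_comm, sup_comm]⟩

/-- Edge label table for the complement of `C₃ + C₄`. -/
def T2 : ℕ → ℕ → ℕ
  | 0, 3 => 5 | 0, 4 => 1 | 0, 5 => 9 | 0, 6 => 13 | 1, 3 => 7 | 1, 4 => 4 | 1, 5 => 14
  | 1, 6 => 3 | 2, 3 => 2 | 2, 4 => 8 | 2, 5 => 6 | 2, 6 => 12 | 3, 5 => 10 | 4, 6 => 11
  | _, _ => 0

def f2 : Sym2 (Fin 7) → ℕ :=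
  Sym2.lift ⟨fun a b => T2 (min a.val b.val) (max a.val b.val),
    fun a b => by simp [min_comm, max_comm, inf_comm, sup_comm]⟩

lemma bijOn_of_finset {α β : Type*} (f : α → β) (s : Finset α) (t : Finset β)
    (h1 : ∀ e ∈ s, f e ∈ t)
    (h2 : ∀ e ∈ s, ∀ e' ∈ s, f e = f e' → e = e')
    (h3 : ∀ y ∈ t, ∃ e ∈ s, f e = y) :
    Set.BijOn f ↑s ↑t := by
  refine ⟨fun e he => ?_, fun a ha b hb hab => ?_, fun y hy => ?_⟩
  · exact h1 e (Finset.mem_coe.mp he)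
  · exact h2 a (Finset.mem_coe.mp ha) b (Finset.mem_coe.mp hb) hab
  · obtain ⟨e, he, hfe⟩ := h3 y (Finset.mem_coe.mp hy)
    exact ⟨e, Finset.mem_coe.mpr he, hfe⟩

lemma hla1 : IsLocalAntimagic circulant7_12 f1 := by
  constructor
  · exact bijOn_of_finset _ _ _ (by decide) (by decide) (by decide)
  · intro u v h
    revert h
    revert u v
    decide

lemma hcc1 : colorCount circulant7_12 f1 = 4 := by decide

lemma hla2 : IsLocalAntimagic c3PlusC4ᶜ f2 := by
  constructor
  · exact bijOn_of_finset _ _ _ (by decide) (by decide) (by decide)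
  · intro u v h
    revert h
    revert u v
    decide

lemma hcc2 : colorCount c3PlusC4ᶜ f2 = 3 := by decide

/-- Any 3 distinct vertices of `C₇(1,2)` contain an adjacent pair. -/
lemma indep_circ : ∀ a b c : ZMod 7, a ≠ b → a ≠ c → b ≠ c →
    (circulant7_12.Adj a b ∨ circulant7_12.Adj a c ∨ circulant7_12.Adj b c) := by decide

lemma lower1 (f : Sym2 (ZMod 7) → ℕ)
    (hadj : ∀ ⦃u v : ZMod 7⦄, circulant7_12.Adj u v → fplus circulant7_12 f u ≠ fplus circulant7_12 f v) :
    4 ≤ colorCount circulant7_12 f := by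
  by_contra hlt
  push_neg at hlt
  set S := (Finset.univ.image (fplus circulant7_12 f)) with hS
  have hcard : S.card ≤ 3 := by
    have : colorCount circulant7_12 f = S.card := rfl
    omega
  have hfib : ∀ b ∈ S, (Finset.univ.filter (fun v => fplus circulant7_12 f v = b)).card ≤ 2 := by
    intro b _
    by_contra h
    push_neg at h
    obtain ⟨x, y, z, hx, hy, hz, hxy, hxz, hyz⟩ := Finset.two_lt_card_iff.mp h
    simp only [Finset.mem_filter] at hx hy hz
    rcases indep_circ x y z hxy hxz hyz with h' | h' | h' <;>
      [exact hadj h' (hx.2.trans hy.2.symm); exact hadj h' (hx.2.trans hz.2.symm);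
       exact hadj h' (hy.2.trans hz.2.symm)]
  have hsum := Finset.card_eq_sum_card_fiberwise
    (f := fplus circulant7_12 f) (s := Finset.univ) (t := S)
    (fun x _ => Finset.mem_image_of_mem _ (Finset.mem_univ x))
  have h7 : (Finset.univ : Finset (ZMod 7)).card = 7 := by decide
  have hle : ∑ b ∈ S, (Finset.univ.filter (fun v => fplus circulant7_12 f v = b)).card
      ≤ ∑ b ∈ S, 2 := Finset.sum_le_sum hfib
  rw [Finset.sum_const, smul_eq_mul] at hle
  omega

/-- `{0, 3, 5}` is a triangle in the complement of `C₃ + C₄`. -/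
lemma tri1 : c3PlusC4ᶜ.Adj 0 3 := by decide
lemma tri2 : c3PlusC4ᶜ.Adj 0 5 := by decide
lemma tri3 : c3PlusC4ᶜ.Adj 3 5 := by decide

lemma lower2 (f : Sym2 (Fin 7) → ℕ)
    (hadj : ∀ ⦃u v : Fin 7⦄, c3PlusC4ᶜ.Adj u v → fplus c3PlusC4ᶜ f u ≠ fplus c3PlusC4ᶜ f v) :
    3 ≤ colorCount c3PlusC4ᶜ f := by
  have h03 := hadj tri1
  have h05 := hadj tri2
  have h35 := hadj tri3
  have hsub : ({fplus c3PlusC4ᶜ f 0, fplus c3PlusC4ᶜ f 3, fplus c3PlusC4ᶜ f 5} : Finset ℕ)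
      ⊆ Finset.univ.image (fplus c3PlusC4ᶜ f) := by
    intro x hx
    simp only [Finset.mem_insert, Finset.mem_singleton] at hx
    rcases hx with rfl | rfl | rfl <;> exact Finset.mem_image_of_mem _ (Finset.mem_univ _)
  have hcard : ({fplus c3PlusC4ᶜ f 0, fplus c3PlusC4ᶜ f 3, fplus c3PlusC4ᶜ f 5} : Finset ℕ).card = 3 := by
    rw [Finset.card_insert_of_notMem (by simp [h03, h05]),
      Finset.card_insert_of_notMem (by simp [h35]), Finset.card_singleton]
  calc 3 = _ := hcard.symm
    _ ≤ _ := Finset.card_le_card hsub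

theorem chiLA_circulant7_and_complement :
    chiLA circulant7_12 = 4 ∧ chiLA c3PlusC4ᶜ = 3 := by
  constructor
  · apply le_antisymm
    · exact Nat.sInf_le ⟨f1, hla1, hcc1⟩
    · have hne : {t | ∃ f : Sym2 (ZMod 7) → ℕ,
          IsLocalAntimagic circulant7_12 f ∧ colorCount circulant7_12 f = t}.Nonempty :=
        ⟨4, f1, hla1, hcc1⟩
      refine le_csInf hne ?_
      rintro t ⟨f, ⟨_, hadj⟩, rfl⟩
      exact lower1 f hadj
  · apply le_antisymm
    · exact Nat.sInf_le ⟨f2, hla2, hcc2⟩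
    · have hne : {t | ∃ f : Sym2 (Fin 7) → ℕ,
          IsLocalAntimagic c3PlusC4ᶜ f ∧ colorCount c3PlusC4ᶜ f = t}.Nonempty :=
        ⟨3, f2, hla2, hcc2⟩
      refine le_csInf hne ?_
      rintro t ⟨f, ⟨_, hadj⟩, rfl⟩
      exact lower2 f hadj
end
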